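/- Let K : 𝒦 → E and Q : 𝒦 → F be bounded linear operators between Banach spaces (𝒦 a Hilbert space), and assume Q is surjective. Then the restriction K : ker Q → E is a Fredholm operator (of index l) if and only if the direct sum map K ⊕ Q : 𝒦 → E ⊕ F, u ↦ (Ku, Qu), is Fredholm (of index l). -/

import Mathlib

/-!
A continuous right inverse `R` of `Q` (it exists because `ker Q` is orthogonally complemented)
splits `𝒦 ≃ F × ker Q` via `u ↦ (Q u, u - R (Q u))`. In these coordinates `K ⊕ Q` is
`id_F × K|ker Q` followed by the shear `(f, e) ↦ (e + K (R f), f)`, which is an automorphism of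
`F × E` up to swapping the factors. Kernel, cokernel and closedness of the range are unchanged
by composing with isomorphisms on either side and by adding an identity summand.
-/

/-- The Fredholm index: `dim ker − dim coker` (as an integer, with the convention
`finrank = 0` in the infinite-dimensional case). -/
noncomputable def fredholmIndex {E F : Type*}
    [NormedAddCommGroup E] [NormedSpace ℂ E] [NormedAddCommGroup F] [NormedSpace ℂ F]
    (T : E →L[ℂ] F) : ℤ :=
  (Module.finrank ℂ (LinearMap.ker (T : E →ₗ[ℂ] F)) : ℤ) -
    (Module.finrank ℂ (F ⧸ LinearMap.range (T : E →ₗ[ℂ] F)) : ℤ)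

/-- A bounded operator is Fredholm if it has finite-dimensional kernel and cokernel
and closed range. -/
def IsFredholm {E F : Type*}
    [NormedAddCommGroup E] [NormedSpace ℂ E] [NormedAddCommGroup F] [NormedSpace ℂ F]
    (T : E →L[ℂ] F) : Prop :=
  FiniteDimensional ℂ (LinearMap.ker (T : E →ₗ[ℂ] F)) ∧
  FiniteDimensional ℂ (F ⧸ LinearMap.range (T : E →ₗ[ℂ] F)) ∧
  IsClosed (LinearMap.range (T : E →ₗ[ℂ] F) : Set F)

open LinearMap (ker range)

noncomputable section Fredholm

variable {E F E' F' G : Type*}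
  [NormedAddCommGroup E] [NormedSpace ℂ E] [NormedAddCommGroup F] [NormedSpace ℂ F]
  [NormedAddCommGroup E'] [NormedSpace ℂ E'] [NormedAddCommGroup F'] [NormedSpace ℂ F']
  [NormedAddCommGroup G] [NormedSpace ℂ G]

theorem isFredholm_iff_of_linearEquiv {T : E →L[ℂ] F} {S : E' →L[ℂ] F'}
    (eKer : ker (T : E →ₗ[ℂ] F) ≃ₗ[ℂ] ker (S : E' →ₗ[ℂ] F'))
    (eCoker : (F ⧸ range (T : E →ₗ[ℂ] F)) ≃ₗ[ℂ]
      (F' ⧸ range (S : E' →ₗ[ℂ] F')))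
    (hClosed : IsClosed (range (T : E →ₗ[ℂ] F) : Set F) ↔
      IsClosed (range (S : E' →ₗ[ℂ] F') : Set F')) :
    IsFredholm T ↔ IsFredholm S :=
  and_congr (Module.Finite.equiv_iff eKer) (and_congr (Module.Finite.equiv_iff eCoker) hClosed)

theorem fredholmIndex_eq_of_linearEquiv {T : E →L[ℂ] F} {S : E' →L[ℂ] F'}
    (eKer : ker (T : E →ₗ[ℂ] F) ≃ₗ[ℂ] ker (S : E' →ₗ[ℂ] F'))
    (eCoker : (F ⧸ range (T : E →ₗ[ℂ] F)) ≃ₗ[ℂ]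
      (F' ⧸ range (S : E' →ₗ[ℂ] F'))) :
    fredholmIndex T = fredholmIndex S := by
  rw [fredholmIndex, fredholmIndex, eKer.finrank_eq, eCoker.finrank_eq]

section CompEquiv

variable (T : E →L[ℂ] F) (e : E' ≃L[ℂ] E)

theorem range_comp_continuousLinearEquiv :
    range (T ∘L (e : E' →L[ℂ] E) : E' →ₗ[ℂ] F) = range (T : E →ₗ[ℂ] F) :=
  LinearEquiv.range_comp e.toLinearEquiv _

def kerCompContinuousLinearEquiv :
    ker (T ∘L (e : E' →L[ℂ] E) : E' →ₗ[ℂ] F) ≃ₗ[ℂ] ker (T : E →ₗ[ℂ] F) :=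
  (LinearEquiv.ofEq _ _ (LinearMap.ker_comp _ _)).trans (e.toLinearEquiv.ofSubmodule' _)

def cokerCompContinuousLinearEquiv :
    (F ⧸ range (T ∘L (e : E' →L[ℂ] E) : E' →ₗ[ℂ] F)) ≃ₗ[ℂ]
      (F ⧸ range (T : E →ₗ[ℂ] F)) :=
  Submodule.quotEquivOfEq _ _ (range_comp_continuousLinearEquiv T e)

theorem isFredholm_comp_continuousLinearEquiv :
    IsFredholm (T ∘L (e : E' →L[ℂ] E)) ↔ IsFredholm T :=
  isFredholm_iff_of_linearEquiv (kerCompContinuousLinearEquiv T e)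
    (cokerCompContinuousLinearEquiv T e) (by rw [range_comp_continuousLinearEquiv])

theorem fredholmIndex_comp_continuousLinearEquiv :
    fredholmIndex (T ∘L (e : E' →L[ℂ] E)) = fredholmIndex T :=
  fredholmIndex_eq_of_linearEquiv (kerCompContinuousLinearEquiv T e)
    (cokerCompContinuousLinearEquiv T e)

end CompEquiv

section EquivComp

variable (T : E →L[ℂ] F) (e : F ≃L[ℂ] F')

def kerContinuousLinearEquivComp :
    ker ((e : F →L[ℂ] F') ∘L T : E →ₗ[ℂ] F') ≃ₗ[ℂ] ker (T : E →ₗ[ℂ] F) :=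
  LinearEquiv.ofEq _ _ (LinearEquiv.ker_comp e.toLinearEquiv _)

def cokerContinuousLinearEquivComp :
    (F' ⧸ range ((e : F →L[ℂ] F') ∘L T : E →ₗ[ℂ] F')) ≃ₗ[ℂ]
      (F ⧸ range (T : E →ₗ[ℂ] F)) :=
  (Submodule.Quotient.equiv _ _ e.toLinearEquiv (LinearMap.range_comp _ _).symm).symm

theorem isFredholm_continuousLinearEquiv_comp :
    IsFredholm ((e : F →L[ℂ] F') ∘L T) ↔ IsFredholm T := by
  refine isFredholm_iff_of_linearEquiv (kerContinuousLinearEquivComp T e)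
    (cokerContinuousLinearEquivComp T e) ?_
  rw [ContinuousLinearMap.toLinearMap_comp, LinearMap.range_comp, Submodule.map_coe]
  exact e.toHomeomorph.isClosed_image

theorem fredholmIndex_continuousLinearEquiv_comp :
    fredholmIndex ((e : F →L[ℂ] F') ∘L T) = fredholmIndex T :=
  fredholmIndex_eq_of_linearEquiv (kerContinuousLinearEquivComp T e)
    (cokerContinuousLinearEquivComp T e)

end EquivComp

section ProdMapId

variable (T : E →L[ℂ] F)

theorem range_id_prodMap :
    range ((ContinuousLinearMap.id ℂ G).prodMap T : G × E →ₗ[ℂ] G × F) =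
      (⊤ : Submodule ℂ G).prod (range (T : E →ₗ[ℂ] F)) := by
  rw [ContinuousLinearMap.coe_prodMap, LinearMap.range_prodMap, ContinuousLinearMap.coe_id,
    LinearMap.range_id]

def kerIdProdMap :
    ker ((ContinuousLinearMap.id ℂ G).prodMap T : G × E →ₗ[ℂ] G × F) ≃ₗ[ℂ]
      ker (T : E →ₗ[ℂ] F) :=
  ((Submodule.equivMapOfInjective _ LinearMap.inr_injective _).trans (LinearEquiv.ofEq _ _
    (by rw [Submodule.map_inr, ContinuousLinearMap.coe_prodMap, LinearMap.ker_prodMap,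
      ContinuousLinearMap.coe_id, LinearMap.ker_id]))).symm

def cokerIdProdMap :
    ((G × F) ⧸ range ((ContinuousLinearMap.id ℂ G).prodMap T : G × E →ₗ[ℂ] G × F)) ≃ₗ[ℂ]
      (F ⧸ range (T : E →ₗ[ℂ] F)) :=
  let π := (range (T : E →ₗ[ℂ] F)).mkQ ∘ₗ LinearMap.snd ℂ G F
  have hπ : Function.Surjective π :=
    (Submodule.mkQ_surjective _).comp LinearMap.snd_surjective
  have hker : range ((ContinuousLinearMap.id ℂ G).prodMap T : G × E →ₗ[ℂ] G × F) = ker π := by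
    rw [range_id_prodMap, LinearMap.ker_comp, Submodule.ker_mkQ, Submodule.comap_snd]
  (Submodule.quotEquivOfEq _ _ hker).trans (π.quotKerEquivOfSurjective hπ)

theorem isFredholm_id_prodMap :
    IsFredholm ((ContinuousLinearMap.id ℂ G).prodMap T) ↔ IsFredholm T := by
  refine isFredholm_iff_of_linearEquiv (kerIdProdMap T) (cokerIdProdMap T) ?_
  rw [range_id_prodMap, Submodule.prod_coe, Submodule.top_coe]
  refine ⟨fun h ↦ ?_, isClosed_univ.prod⟩
  simpa only [Set.mk_preimage_prod_right (Set.mem_univ (0 : G))] using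
    h.preimage (Continuous.prodMk_right (0 : G))

theorem fredholmIndex_id_prodMap :
    fredholmIndex ((ContinuousLinearMap.id ℂ G).prodMap T) = fredholmIndex T :=
  fredholmIndex_eq_of_linearEquiv (kerIdProdMap T) (cokerIdProdMap T)

end ProdMapId

end Fredholm

section Splitting

variable {𝕜 𝒦 E F : Type*} [NontriviallyNormedField 𝕜]
  [NormedAddCommGroup 𝒦] [NormedSpace 𝕜 𝒦] [NormedAddCommGroup E] [NormedSpace 𝕜 E]
  [NormedAddCommGroup F] [NormedSpace 𝕜 F]

theorem ContinuousLinearMap.hasRightInverse_of_surjective_of_closedComplemented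
    [CompleteSpace 𝒦] [CompleteSpace F] {Q : 𝒦 →L[𝕜] F} (hQ : Function.Surjective Q)
    (hker : (ker (Q : 𝒦 →ₗ[𝕜] F)).ClosedComplemented) : Q.HasRightInverse := by
  obtain ⟨P, hP⟩ := hker
  have : CompleteSpace (ker (Q : 𝒦 →ₗ[𝕜] F)) := Q.isClosed_ker.completeSpace_coe
  let ψ := Q.equivProdOfSurjectiveOfIsCompl P (LinearMap.range_eq_top.2 hQ)
    (LinearMap.range_eq_top.2 fun x ↦ ⟨x, hP x⟩) (LinearMap.isCompl_of_proj hP)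
  exact ⟨(ψ.symm : F × ker (Q : 𝒦 →ₗ[𝕜] F) →L[𝕜] 𝒦).comp (.inl 𝕜 F _),
    fun f ↦ congr_arg Prod.fst (ψ.apply_symm_apply (f, 0))⟩

theorem ContinuousLinearMap.prod_eq_comp_id_prodMap_comp (K : 𝒦 →L[𝕜] E) (Q : 𝒦 →L[𝕜] F)
    (R : F →L[𝕜] 𝒦) (hR : Function.RightInverse R Q) :
    K.prod Q =
      (((ContinuousLinearEquiv.refl 𝕜 F).skewProd (.refl 𝕜 E) (K ∘L R)).trans
          (.prodComm 𝕜 F E) : F × E →L[𝕜] E × F) ∘L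
        ((ContinuousLinearMap.id 𝕜 F).prodMap (K ∘L (ker (Q : 𝒦 →ₗ[𝕜] F)).subtypeL) ∘L
          (.equivOfRightInverse Q R hR : 𝒦 ≃L[𝕜] F × ker (Q : 𝒦 →ₗ[𝕜] F))) := by
  ext u <;> simp

end Splitting

theorem Submodule.closedComplemented_of_hasOrthogonalProjection {𝕜 E : Type*} [RCLike 𝕜]
    [NormedAddCommGroup E] [InnerProductSpace 𝕜 E] (K : Submodule 𝕜 E)
    [K.HasOrthogonalProjection] :
    K.ClosedComplemented :=
  ⟨K.orthogonalProjectionOnto, K.orthogonalProjectionOnto_mem_subspace_eq_self⟩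

theorem fredholm_restriction_iff_prod_general
    {𝒦 E F : Type*} [NormedAddCommGroup 𝒦] [InnerProductSpace ℂ 𝒦] [CompleteSpace 𝒦]
    [NormedAddCommGroup E] [NormedSpace ℂ E]
    [NormedAddCommGroup F] [NormedSpace ℂ F] [CompleteSpace F]
    (K : 𝒦 →L[ℂ] E) (Q : 𝒦 →L[ℂ] F) (hQ : Function.Surjective Q) (l : ℤ) :
    (IsFredholm (K.comp (LinearMap.ker (Q : 𝒦 →ₗ[ℂ] F)).subtypeL) ∧
        fredholmIndex (K.comp (LinearMap.ker (Q : 𝒦 →ₗ[ℂ] F)).subtypeL) = l) ↔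
      (IsFredholm (K.prod Q) ∧ fredholmIndex (K.prod Q) = l) := by
  have : CompleteSpace (ker (Q : 𝒦 →ₗ[ℂ] F)) := Q.isClosed_ker.completeSpace_coe
  obtain ⟨R, hR⟩ := Q.hasRightInverse_of_surjective_of_closedComplemented hQ
    (Submodule.closedComplemented_of_hasOrthogonalProjection _)
  rw [K.prod_eq_comp_id_prodMap_comp Q R hR, isFredholm_continuousLinearEquiv_comp,
    fredholmIndex_continuousLinearEquiv_comp, isFredholm_comp_continuousLinearEquiv,
    fredholmIndex_comp_continuousLinearEquiv, isFredholm_id_prodMap, fredholmIndex_id_prodMap]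

/-- with `K : 𝒦 → E`, `Q : 𝒦 → F` bounded, `Q` surjective, the restriction
of `K` to `ker Q` is Fredholm of index `l` iff `K ⊕ Q : 𝒦 → E × F` is Fredholm of index `l`. -/
theorem fredholm_restriction_iff_prod
    {𝒦 E F : Type*} [NormedAddCommGroup 𝒦] [InnerProductSpace ℂ 𝒦] [CompleteSpace 𝒦]
    [NormedAddCommGroup E] [NormedSpace ℂ E] [CompleteSpace E]
    [NormedAddCommGroup F] [NormedSpace ℂ F] [CompleteSpace F]
    (K : 𝒦 →L[ℂ] E) (Q : 𝒦 →L[ℂ] F) (hQ : Function.Surjective Q) (l : ℤ) :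
    (IsFredholm (K.comp (LinearMap.ker (Q : 𝒦 →ₗ[ℂ] F)).subtypeL) ∧
        fredholmIndex (K.comp (LinearMap.ker (Q : 𝒦 →ₗ[ℂ] F)).subtypeL) = l) ↔
      (IsFredholm (K.prod Q) ∧ fredholmIndex (K.prod Q) = l) :=
  fredholm_restriction_iff_prod_general K Q hQ l
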